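/- arXiv:2103.05030 — 5 statements merged into one kernel-verified Lean document; each statement's English description precedes it below -/
import Mathlib

section
/- Fix x in X^n and y in Y^n with Sum over c in G[x] of rho_p(G_{x,c})*rho_N(y|c) > 0, and let c* in G[x] minimize -log rho_N(y|c) - log rho_p(G_{x,c}) over c in G[x]. Then no other loss function outperforms the optimal one: for every loss function L' : Y^n x Y^n -> R ∪ {+infinity} and every c' in G[x] minimizing L'(c,y) - log rho_p(G_{x,c}) over c in G[x], one has rho_p(G_{x,c'})*rho_N(y|c') <= rho_p(G_{x,c*})*rho_N(y|c*). -/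
/-!
STATEMENT 2: Fix `(x,y)` with positive marginal probability and let `c* ∈ G[x]`
minimize `-log ρN(y|c) - log ρp(G_{x,c})` over `c ∈ G[x]`.  Then for every loss
function `L' : Y^n × Y^n → ℝ ∪ {+∞}` and every `c' ∈ G[x]` minimizing
`L'(c,y) - log ρp(G_{x,c})` over `c ∈ G[x]`, the expected reward of `c'` is at
most that of `c*`: `ρp(G_{x,c'}) * ρN(y|c') ≤ ρp(G_{x,c*}) * ρN(y|c*)`.
-/

attribute [local instance] Classical.propDecidable

/-- `-log r`, with the convention `-log 0 = +∞`, valued in `ℝ ∪ {+∞}`. -/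
noncomputable def negLog (r : ℝ) : WithTop ℝ :=
  if r = 0 then ⊤ else (((-Real.log r) : ℝ) : WithTop ℝ)

lemma negLog_mul (a b : ℝ) (ha : 0 ≤ a) (hb : 0 ≤ b) :
    negLog (a * b) = negLog a + negLog b := by
  unfold negLog
  rcases eq_or_lt_of_le ha with ha0 | ha0
  · simp [← ha0]
  rcases eq_or_lt_of_le hb with hb0 | hb0
  · simp [← hb0]
  rw [if_neg (by positivity), if_neg ha0.ne', if_neg hb0.ne',
    Real.log_mul ha0.ne' hb0.ne', neg_add, WithTop.coe_add]

lemma le_of_negLog_le {a b : ℝ} (ha : 0 ≤ a) (hb : 0 ≤ b)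
    (h : negLog a ≤ negLog b) : b ≤ a := by
  unfold negLog at h
  rcases eq_or_lt_of_le hb with hb0 | hb0
  · subst hb0; exact ha
  rcases eq_or_lt_of_le ha with ha0 | ha0
  · rw [if_neg hb0.ne', if_pos ha0.symm] at h
    exact absurd h (by simp)
  rw [if_neg ha0.ne', if_neg hb0.ne', WithTop.coe_le_coe, neg_le_neg_iff] at h
  exact (Real.log_le_log_iff hb0 ha0).mp h

/-- `progOut p x = p[x]`, the vector of outputs of program `p` on inputs `x`. -/
def progOut {X Y : Type*} {n : ℕ} (p : X → Y) (x : Fin n → X) : Fin n → Y :=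
  fun i => p (x i)

theorem stmt2 {X Y : Type*} [Countable X] [Countable Y] {n : ℕ}
    (G : Finset (X → Y)) (hG : G.Nonempty)
    -- prior distribution over programs in `G`
    (ρp : (X → Y) → ℝ) (hρp0 : ∀ q, 0 ≤ ρp q) (hρp1 : ∑ q ∈ G, ρp q = 1)
    -- noise source
    (ρN : (Fin n → Y) → (Fin n → Y) → ℝ)
    (hρN0 : ∀ z y, 0 ≤ ρN z y) (hρN1 : ∀ z, ∑' y, ρN z y = 1)
    -- fixed data `(x, y)` with positive marginal probability
    (x : Fin n → X) (y : Fin n → Y)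
    (hden : 0 < ∑ c ∈ G.image (fun q => progOut q x),
        (∑ q ∈ G.filter (fun q => progOut q x = c), ρp q) * ρN c y)
    -- `c* ∈ G[x]` minimizes the optimal objective `-log ρN(y|c) - log ρp(G_{x,c})`
    (cstar : Fin n → Y) (hcstar : cstar ∈ G.image (fun q => progOut q x))
    (hmin : ∀ c ∈ G.image (fun q => progOut q x),
        negLog (ρN cstar y) + negLog (∑ q ∈ G.filter (fun q => progOut q x = cstar), ρp q)
          ≤ negLog (ρN c y) + negLog (∑ q ∈ G.filter (fun q => progOut q x = c), ρp q))
    -- an arbitrary loss function `L'` valued in `ℝ ∪ {+∞}`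
    (L' : (Fin n → Y) → (Fin n → Y) → WithTop ℝ)
    -- `c' ∈ G[x]` minimizes `L'(c,y) - log ρp(G_{x,c})` over `c ∈ G[x]`
    (c' : Fin n → Y) (hc' : c' ∈ G.image (fun q => progOut q x))
    (hmin' : ∀ c ∈ G.image (fun q => progOut q x),
        L' c' y + negLog (∑ q ∈ G.filter (fun q => progOut q x = c'), ρp q)
          ≤ L' c y + negLog (∑ q ∈ G.filter (fun q => progOut q x = c), ρp q)) :
    -- then `c'` has expected reward at most that of `c*`
    (∑ q ∈ G.filter (fun q => progOut q x = c'), ρp q) * ρN c' y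
      ≤ (∑ q ∈ G.filter (fun q => progOut q x = cstar), ρp q) * ρN cstar y := by
  have hS : ∀ c : Fin n → Y, 0 ≤ ∑ q ∈ G.filter (fun q => progOut q x = c), ρp q :=
    fun c => Finset.sum_nonneg fun q _ => hρp0 q
  have h := hmin c' hc'
  rw [← negLog_mul _ _ (hρN0 cstar y) (hS cstar), ← negLog_mul _ _ (hρN0 c' y) (hS c')] at h
  have := le_of_negLog_le (mul_nonneg (hρN0 cstar y) (hS cstar))
    (mul_nonneg (hρN0 c' y) (hS c')) h
  linarith [this]
end

section
/- Let X and Y be countable types, G a finite nonempty set of functions from X to Y, rho_p a probability mass function on G with rho_p(p) > 0 for every p in G, d a distance metric on output vectors, and L a loss function. If the input source rho_i is differentiating with respect to G and d, and the noise source rho_N is differentiating with respect to d and L, then the synthesis algorithm converges: for every δ > 0 there exists k such that for all n ≥ k and every p_h in G, the probability, over x sampled from rho_i^n and y sampled from rho_N(.|p_h[x]), that every p in G with p ≠ p_h satisfies L(p[x],y) - log rho_p(G_{x,p[x]}) > L(p_h[x],y) - log rho_p(G_{x,p_h[x]}) is at least 1 - δ. -/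
/-!
STATEMENT 5: Convergence.  If the prior `ρp` is positive on the finite
nonempty set `G`, the input source is differentiating w.r.t. `G` and the
distance `d`, and the noise source is differentiating w.r.t. `d` and the loss
`L`, then for every `δ > 0` there is `k` such that for all `n ≥ k` and every
`p_h ∈ G`, with probability at least `1 - δ` (over `x ~ ρi^n`,
`y ~ ρN(·|p_h[x])`) every `p ∈ G` with `p ≠ p_h` satisfies
`L(p[x],y) - log ρp(G_{x,p[x]}) > L(p_h[x],y) - log ρp(G_{x,p_h[x]})`.
-/

attribute [local instance] Classical.propDecidable

section helpers
variable {α : Type*} {ρ : α → ℝ}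

private lemma tsum_ite_eq_ind (P : α → Prop) :
    (∑' a, (if P a then ρ a else 0)) = ∑' a, Set.indicator {a | P a} ρ a := by
  refine tsum_congr fun a => ?_
  by_cases h : P a <;> simp [h]

private lemma ind_nonneg (h0 : ∀ a, 0 ≤ ρ a) (s : Set α) (a : α) :
    0 ≤ Set.indicator s ρ a :=
  Set.indicator_nonneg (fun a _ => h0 a) a

private lemma ind_le (h0 : ∀ a, 0 ≤ ρ a) (s : Set α) (a : α) :
    Set.indicator s ρ a ≤ ρ a :=
  Set.indicator_le_self' (fun a _ => h0 a) a

private lemma ind_add_not (hρ : Summable ρ) (s : Set α) :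
    (∑' a, Set.indicator s ρ a) + (∑' a, Set.indicator sᶜ ρ a) = ∑' a, ρ a := by
  rw [← Summable.tsum_add (hρ.indicator s) (hρ.indicator sᶜ)]
  congr 1; funext a
  simpa using congrFun (s.indicator_self_add_indicator_compl ρ) a

private lemma union_bound (hρ : Summable ρ) (h0 : ∀ a, 0 ≤ ρ a) (h1 : ∑' a, ρ a = 1)
    {ι : Type*} (S : Finset ι) (E : ι → α → Prop) (c : ℝ)
    (hE : ∀ i ∈ S, 1 - c ≤ ∑' a, Set.indicator {a | E i a} ρ a) :
    1 - S.card * c ≤ ∑' a, Set.indicator {a | ∀ i ∈ S, E i a} ρ a := by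
  have hnot : ∀ i ∈ S, (∑' a, Set.indicator {a | E i a}ᶜ ρ a) ≤ c := by
    intro i hi
    have h2 := ind_add_not hρ {a | E i a}
    rw [h1] at h2
    have := hE i hi
    linarith
  have key : (∑' a, Set.indicator {a | ∀ i ∈ S, E i a}ᶜ ρ a) ≤
      ∑ i ∈ S, ∑' a, Set.indicator {a | E i a}ᶜ ρ a := by
    calc (∑' a, Set.indicator {a | ∀ i ∈ S, E i a}ᶜ ρ a)
        ≤ ∑' a, ∑ i ∈ S, Set.indicator {a | E i a}ᶜ ρ a := by
          refine Summable.tsum_le_tsum ?_ (hρ.indicator _)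
            (summable_sum (fun i _ => hρ.indicator _))
          intro a
          by_cases h : ∀ i ∈ S, E i a
          · rw [Set.indicator_of_notMem (by simpa using h)]
            exact Finset.sum_nonneg (fun i _ => ind_nonneg h0 _ a)
          · push_neg at h
            obtain ⟨i, hi, hEi⟩ := h
            have hmem : a ∈ {a | ∀ i ∈ S, E i a}ᶜ := by
              simp only [Set.mem_compl_iff, Set.mem_setOf_eq]
              push_neg; exact ⟨i, hi, hEi⟩
            rw [Set.indicator_of_mem hmem]
            have he : ρ a = Set.indicator {a | E i a}ᶜ ρ a := by
              rw [Set.indicator_of_mem (by simpa using hEi)]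
            rw [he]
            exact Finset.single_le_sum (f := fun j => Set.indicator {a | E j a}ᶜ ρ a)
              (fun j _ => ind_nonneg h0 _ a) hi
      _ = ∑ i ∈ S, ∑' a, Set.indicator {a | E i a}ᶜ ρ a :=
          Summable.tsum_finsetSum (fun i _ => hρ.indicator _)
  have h2 := ind_add_not hρ {a | ∀ i ∈ S, E i a}
  rw [h1] at h2
  have h3 : ∑ i ∈ S, (∑' a, Set.indicator {a | E i a}ᶜ ρ a) ≤ S.card * c := by
    calc ∑ i ∈ S, (∑' a, Set.indicator {a | E i a}ᶜ ρ a) ≤ ∑ _i ∈ S, c :=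
          Finset.sum_le_sum hnot
      _ = S.card * c := by rw [Finset.sum_const, nsmul_eq_mul]
  linarith

end helpers

theorem stmt5 {X Y : Type*} [Countable X] [Countable Y]
    (G : Finset (X → Y)) (hG : G.Nonempty)
    -- prior distribution over programs in `G`, positive on `G`
    (ρp : (X → Y) → ℝ) (hρp0 : ∀ q, 0 ≤ ρp q) (hρp1 : ∑ q ∈ G, ρp q = 1)
    (hρppos : ∀ q ∈ G, 0 < ρp q)
    -- input source: for each `n`, a distribution on `X^n`
    (ρi : (n : ℕ) → (Fin n → X) → ℝ)
    (hρi0 : ∀ n x, 0 ≤ ρi n x) (hρi1 : ∀ n, ∑' x : Fin n → X, ρi n x = 1)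
    -- noise source: for each `n` and `z ∈ Y^n`, a distribution on `Y^n`
    (ρN : (n : ℕ) → (Fin n → Y) → (Fin n → Y) → ℝ)
    (hρN0 : ∀ n z y, 0 ≤ ρN n z y) (hρN1 : ∀ n z, ∑' y : Fin n → Y, ρN n z y = 1)
    -- a distance metric on output vectors
    (d : (n : ℕ) → (Fin n → Y) → (Fin n → Y) → ℝ)
    (hd0 : ∀ n z z', 0 ≤ d n z z')
    -- a loss function valued in `ℝ ∪ {+∞}`
    (L : (n : ℕ) → (Fin n → Y) → (Fin n → Y) → WithTop ℝ)
    -- the input source is differentiating w.r.t. `G` and `d`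
    (hInput : ∀ ph ∈ G, ∀ ε > (0 : ℝ), ∀ δ > (0 : ℝ), ∃ n₀ : ℕ, ∀ n ≥ n₀,
      1 - δ ≤ ∑' x : Fin n → X,
        (if ∀ p ∈ G, p ≠ ph → ε < d n (progOut ph x) (progOut p x)
         then ρi n x else 0))
    -- the noise source is differentiating w.r.t. `d` and `L`
    (hNoise : ∀ γ > (0 : ℝ), ∀ δ > (0 : ℝ), ∃ εN > (0 : ℝ), ∃ nN : ℕ, ∀ n ≥ nN,
      ∀ zh : Fin n → Y,
      1 - δ ≤ ∑' y : Fin n → Y,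
        (if ∀ z : Fin n → Y, εN ≤ d n z zh → L n zh y + (γ : WithTop ℝ) < L n z y
         then ρN n zh y else 0)) :
    -- convergence of the synthesis algorithm
    ∀ δ > (0 : ℝ), ∃ k : ℕ, ∀ n ≥ k, ∀ ph ∈ G,
      1 - δ ≤ ∑' x : Fin n → X, ∑' y : Fin n → Y,
        (if ∀ p ∈ G, p ≠ ph →
            L n (progOut ph x) y +
                negLog (∑ q ∈ G.filter (fun q => progOut q x = progOut ph x), ρp q)
              < L n (progOut p x) y +
                negLog (∑ q ∈ G.filter (fun q => progOut q x = progOut p x), ρp q)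
         then ρi n x * ρN n (progOut ph x) y else 0) := by
  -- summability of the sources
  have hρiS : ∀ n, Summable (ρi n) := by
    intro n; by_contra h
    have := hρi1 n
    rw [tsum_eq_zero_of_not_summable h] at this
    norm_num at this
  have hρNS : ∀ n z, Summable (ρN n z) := by
    intro n z; by_contra h
    have := hρN1 n z
    rw [tsum_eq_zero_of_not_summable h] at this
    norm_num at this
  intro δ hδ
  -- the minimum prior mass and the loss-gap γ
  obtain ⟨p₀, hp₀, hm₀⟩ := Finset.exists_mem_eq_inf' hG ρp
  have hmpos : 0 < ρp p₀ := hρppos _ hp₀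
  have hmle : ∀ p ∈ G, ρp p₀ ≤ ρp p := by
    intro p hp; rw [← hm₀]; exact Finset.inf'_le ρp hp
  have hm1 : ρp p₀ ≤ 1 := by
    rw [← hρp1]; exact Finset.single_le_sum (fun q _ => hρp0 q) hp₀
  set C : ℝ := -Real.log (ρp p₀) with hCdef
  have hC0 : 0 ≤ C := by
    have := Real.log_nonpos hmpos.le hm1
    rw [hCdef]; linarith
  set γ : ℝ := C + 1 with hγdef
  have hγ : 0 < γ := by rw [hγdef]; linarith
  set δ' : ℝ := min δ 1 / 2 with hδ'def
  have hδ'pos : 0 < δ' := by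
    have : 0 < min δ 1 := lt_min hδ one_pos
    rw [hδ'def]; linarith
  have hδ'le : 2 * δ' ≤ δ := by
    have := min_le_left δ 1
    rw [hδ'def]; linarith
  have hδ'half : δ' ≤ 1 / 2 := by
    have := min_le_right δ 1
    rw [hδ'def]; linarith
  obtain ⟨εN, hεN, nN, hNmain⟩ := hNoise γ hγ δ' hδ'pos
  have hcard : 0 < (G.card : ℝ) := by exact_mod_cast Finset.card_pos.mpr hG
  set δ'' : ℝ := δ' / G.card with hδ''def
  have hδ''pos : 0 < δ'' := div_pos hδ'pos hcard
  -- choose input horizons for each program as reference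
  have hsel : ∀ p : X → Y, ∃ n₀ : ℕ, p ∈ G → ∀ n ≥ n₀, 1 - δ'' ≤ ∑' x : Fin n → X,
      (if ∀ q ∈ G, q ≠ p → εN < d n (progOut p x) (progOut q x) then ρi n x else 0) := by
    intro p
    by_cases hp : p ∈ G
    · obtain ⟨n₀, h⟩ := hInput p hp εN hεN δ'' hδ''pos
      exact ⟨n₀, fun _ => h⟩
    · exact ⟨0, fun h => absurd h hp⟩
  choose N hN using hsel
  refine ⟨max nN (G.sup N), ?_⟩
  intro n hn ph hph
  have hnN : n ≥ nN := le_trans (le_max_left _ _) hn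
  -- the good input event
  have hPbound : 1 - δ' ≤ ∑' x : Fin n → X,
      Set.indicator {x | ∀ p ∈ G, ∀ q ∈ G, q ≠ p → εN < d n (progOut p x) (progOut q x)}
        (ρi n) x := by
    have hub := union_bound (hρiS n) (hρi0 n) (hρi1 n) G
      (fun p x => ∀ q ∈ G, q ≠ p → εN < d n (progOut p x) (progOut q x)) δ'' ?_
    · have hcd : (G.card : ℝ) * δ'' = δ' := by
        rw [hδ''def]; field_simp
      rw [hcd] at hub
      exact hub
    · intro p hp
      have h := hN p hp n (le_trans (le_trans (Finset.le_sup hp) (le_max_right _ _)) hn)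
      refine le_trans h (le_of_eq (tsum_congr fun x => ?_))
      by_cases hc : x ∈ {x | ∀ q ∈ G, q ≠ p → εN < d n (progOut p x) (progOut q x)}
      · rw [Set.indicator_of_mem hc]; exact if_pos hc
      · rw [Set.indicator_of_notMem hc]; exact if_neg hc
  -- the good noise event
  have hQbound : ∀ z : Fin n → Y, 1 - δ' ≤ ∑' y : Fin n → Y,
      Set.indicator {y | ∀ w : Fin n → Y, εN ≤ d n w z → L n z y + (γ : WithTop ℝ) < L n w y}
        (ρN n z) y := by
    intro z
    have h := hNmain n hnN z
    refine le_trans h (le_of_eq (tsum_congr fun y => ?_))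
    by_cases hc : y ∈ {y | ∀ w : Fin n → Y, εN ≤ d n w z → L n z y + (γ : WithTop ℝ) < L n w y}
    · rw [Set.indicator_of_mem hc]; exact if_pos hc
    · rw [Set.indicator_of_notMem hc]; exact if_neg hc
  -- the core logical implication
  have hcore : ∀ (x : Fin n → X) (y : Fin n → Y),
      (∀ p ∈ G, ∀ q ∈ G, q ≠ p → εN < d n (progOut p x) (progOut q x)) →
      (∀ w : Fin n → Y, εN ≤ d n w (progOut ph x) →
        L n (progOut ph x) y + (γ : WithTop ℝ) < L n w y) →
      (∀ p ∈ G, p ≠ ph →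
        L n (progOut ph x) y +
            negLog (∑ q ∈ G.filter (fun q => progOut q x = progOut ph x), ρp q)
          < L n (progOut p x) y +
            negLog (∑ q ∈ G.filter (fun q => progOut q x = progOut p x), ρp q)) := by
    intro x y hx hy p hp hpne
    have hdist : εN ≤ d n (progOut p x) (progOut ph x) :=
      (hx p hp ph hph (Ne.symm hpne)).le
    have hL := hy (progOut p x) hdist
    have hSfacts : ∀ p' ∈ G,
        ρp p₀ ≤ (∑ q ∈ G.filter (fun q => progOut q x = progOut p' x), ρp q) ∧
        (∑ q ∈ G.filter (fun q => progOut q x = progOut p' x), ρp q) ≤ 1 := by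
      intro p' hp'
      constructor
      · calc ρp p₀ ≤ ρp p' := hmle p' hp'
          _ ≤ _ := by
              exact Finset.single_le_sum (f := ρp) (fun q _ => hρp0 q)
                (Finset.mem_filter.2 ⟨hp', rfl⟩)
      · calc (∑ q ∈ G.filter (fun q => progOut q x = progOut p' x), ρp q)
            ≤ ∑ q ∈ G, ρp q := Finset.sum_le_sum_of_subset_of_nonneg
              (Finset.filter_subset _ _) (fun q hq _ => hρp0 q)
          _ = 1 := hρp1
    set Sh : ℝ := ∑ q ∈ G.filter (fun q => progOut q x = progOut ph x), ρp q with hShdef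
    set Sp : ℝ := ∑ q ∈ G.filter (fun q => progOut q x = progOut p x), ρp q with hSpdef
    obtain ⟨hSh1, hSh2⟩ := hSfacts ph hph
    obtain ⟨hSp1, hSp2⟩ := hSfacts p hp
    have hShpos : 0 < Sh := lt_of_lt_of_le hmpos hSh1
    have hSppos : 0 < Sp := lt_of_lt_of_le hmpos hSp1
    have hnegSh : negLog Sh = ((-Real.log Sh : ℝ) : WithTop ℝ) := by
      rw [negLog, if_neg (ne_of_gt hShpos)]
    have hnegSp : negLog Sp = ((-Real.log Sp : ℝ) : WithTop ℝ) := by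
      rw [negLog, if_neg (ne_of_gt hSppos)]
    have hShC : -Real.log Sh ≤ C := by
      have := Real.log_le_log hmpos hSh1
      rw [hCdef]; linarith
    have hSp0 : 0 ≤ -Real.log Sp := by
      have := Real.log_nonpos hSppos.le hSp2
      linarith
    have hane : L n (progOut ph x) y ≠ ⊤ := by
      intro h
      rw [h, top_add] at hL
      exact not_top_lt hL
    obtain ⟨a, ha⟩ := WithTop.ne_top_iff_exists.mp hane
    rw [← ha] at hL ⊢
    rw [hnegSh, hnegSp]
    have step1 : (↑a + ((-Real.log Sh : ℝ) : WithTop ℝ) : WithTop ℝ) < ↑a + (γ : WithTop ℝ) := by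
      rw [← WithTop.coe_add, ← WithTop.coe_add, WithTop.coe_lt_coe]
      rw [hγdef]; linarith
    have step2 : L n (progOut p x) y ≤ L n (progOut p x) y + ((-Real.log Sp : ℝ) : WithTop ℝ) := by
      refine le_add_of_nonneg_right ?_
      exact_mod_cast hSp0
    exact lt_of_lt_of_le (lt_trans step1 hL) step2
  -- abbreviations for the target
  set zh : (Fin n → X) → (Fin n → Y) := fun x => progOut ph x with hzhdef
  -- pointwise inner bound
  have hinner : ∀ x : Fin n → X,
      Set.indicator {x | ∀ p ∈ G, ∀ q ∈ G, q ≠ p → εN < d n (progOut p x) (progOut q x)}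
        (ρi n) x * (1 - δ') ≤
      ∑' y : Fin n → Y,
        (if ∀ p ∈ G, p ≠ ph →
            L n (progOut ph x) y +
                negLog (∑ q ∈ G.filter (fun q => progOut q x = progOut ph x), ρp q)
              < L n (progOut p x) y +
                negLog (∑ q ∈ G.filter (fun q => progOut q x = progOut p x), ρp q)
         then ρi n x * ρN n (progOut ph x) y else 0) := by
    intro x
    by_cases hx : x ∈ {x | ∀ p ∈ G, ∀ q ∈ G, q ≠ p → εN < d n (progOut p x) (progOut q x)}
    · rw [Set.indicator_of_mem hx]
      have hxP : ∀ p ∈ G, ∀ q ∈ G, q ≠ p → εN < d n (progOut p x) (progOut q x) := hx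
      calc ρi n x * (1 - δ')
          ≤ ρi n x * ∑' y : Fin n → Y,
              Set.indicator {y | ∀ w : Fin n → Y, εN ≤ d n w (progOut ph x) →
                L n (progOut ph x) y + (γ : WithTop ℝ) < L n w y}
                (ρN n (progOut ph x)) y :=
            mul_le_mul_of_nonneg_left (hQbound (progOut ph x)) (hρi0 n x)
        _ = ∑' y : Fin n → Y, ρi n x *
              Set.indicator {y | ∀ w : Fin n → Y, εN ≤ d n w (progOut ph x) →
                L n (progOut ph x) y + (γ : WithTop ℝ) < L n w y}
                (ρN n (progOut ph x)) y := (tsum_mul_left).symm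
        _ ≤ _ := by
            refine Summable.tsum_le_tsum ?_
              (((hρNS n (progOut ph x)).indicator _).mul_left _) ?_
            · intro y
              by_cases hq : y ∈ {y | ∀ w : Fin n → Y, εN ≤ d n w (progOut ph x) →
                  L n (progOut ph x) y + (γ : WithTop ℝ) < L n w y}
              · rw [Set.indicator_of_mem hq, if_pos (hcore x y hxP hq)]
              · rw [Set.indicator_of_notMem hq, mul_zero]
                split_ifs
                · exact mul_nonneg (hρi0 n x) (hρN0 n _ y)
                · exact le_refl 0
            · refine ((hρNS n (progOut ph x)).mul_left (ρi n x)).of_nonneg_of_le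
                (fun y => ?_) (fun y => ?_)
              · split_ifs
                · exact mul_nonneg (hρi0 n x) (hρN0 n _ y)
                · exact le_refl 0
              · split_ifs
                · exact le_refl _
                · exact mul_nonneg (hρi0 n x) (hρN0 n _ y)
    · rw [Set.indicator_of_notMem hx, zero_mul]
      refine tsum_nonneg fun y => ?_
      split_ifs
      · exact mul_nonneg (hρi0 n x) (hρN0 n _ y)
      · exact le_refl 0
  -- summability of the inner sums
  have hinnerSummable : Summable (fun x : Fin n → X =>
      ∑' y : Fin n → Y,
        (if ∀ p ∈ G, p ≠ ph →
            L n (progOut ph x) y +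
                negLog (∑ q ∈ G.filter (fun q => progOut q x = progOut ph x), ρp q)
              < L n (progOut p x) y +
                negLog (∑ q ∈ G.filter (fun q => progOut q x = progOut p x), ρp q)
         then ρi n x * ρN n (progOut ph x) y else 0)) := by
    refine (hρiS n).of_nonneg_of_le (fun x => ?_) (fun x => ?_)
    · refine tsum_nonneg fun y => ?_
      split_ifs
      · exact mul_nonneg (hρi0 n x) (hρN0 n _ y)
      · exact le_refl 0
    · calc (∑' y : Fin n → Y, _) ≤ ∑' y : Fin n → Y, ρi n x * ρN n (progOut ph x) y := by
            refine Summable.tsum_le_tsum (fun y => ?_)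
              (?_ : Summable _) ((hρNS n (progOut ph x)).mul_left (ρi n x))
            · split_ifs
              · exact le_refl _
              · exact mul_nonneg (hρi0 n x) (hρN0 n _ y)
            · refine ((hρNS n (progOut ph x)).mul_left (ρi n x)).of_nonneg_of_le
                (fun y => ?_) (fun y => ?_)
              · split_ifs
                · exact mul_nonneg (hρi0 n x) (hρN0 n _ y)
                · exact le_refl 0
              · split_ifs
                · exact le_refl _
                · exact mul_nonneg (hρi0 n x) (hρN0 n _ y)
        _ = ρi n x := by rw [tsum_mul_left, hρN1, mul_one]
  -- put everything together
  calc (1 : ℝ) - δ ≤ (1 - δ') * (1 - δ') := by nlinarith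
    _ ≤ (∑' x : Fin n → X,
          Set.indicator {x | ∀ p ∈ G, ∀ q ∈ G, q ≠ p → εN < d n (progOut p x) (progOut q x)}
            (ρi n) x) * (1 - δ') := by
        refine mul_le_mul_of_nonneg_right hPbound ?_
        linarith
    _ = ∑' x : Fin n → X,
          Set.indicator {x | ∀ p ∈ G, ∀ q ∈ G, q ≠ p → εN < d n (progOut p x) (progOut q x)}
            (ρi n) x * (1 - δ') := (tsum_mul_right).symm
    _ ≤ _ := by
        refine Summable.tsum_le_tsum hinner (((hρiS n).indicator _).mul_right _) hinnerSummable
end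

section
/- For every n, every tuple z_h = (z_{h,1},...,z_{h,n}) of strings over Σ, and every real γ, the probability, under y sampled from the 1-Delete Noise Source applied to z_h, that every tuple z of strings with d_DL2(z,z_h) ≥ 1 satisfies L_1D(z,y) > L_1D(z_h,y) + γ is equal to 1. Consequently, the 1-Delete Noise Source is differentiating with respect to the DL-2 distance d_DL2 and the 1-Delete Loss Function L_1D. -/
/-!
STATEMENT 11: For every `n`, every string tuple `z_h`, and every real `γ`, the
probability, under `y` sampled from the 1-Delete Noise Source applied to
`z_h`, that every tuple `z` with `d_DL2(z,z_h) ≥ 1` satisfies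
`L_1D(z,y) > L_1D(z_h,y) + γ`, equals `1`.  Consequently, the 1-Delete Noise
Source is differentiating w.r.t. the DL-2 distance `d_DL2` and the 1-Delete
Loss Function `L_1D`.
-/

attribute [local instance] Classical.propDecidable

/-- The number of positions of `s` whose deletion yields `t`. -/
def delCount {A : Type*} [DecidableEq A] (s t : List A) : ℕ :=
  ((Finset.range s.length).filter (fun j => s.eraseIdx j = t)).card

/-- Per-example probability that the 1-Delete Noise Source (parameter `δ`)
corrupts string `s` into string `t`. -/
noncomputable def delNoise {A : Type*} [DecidableEq A] (δ : ℝ) (s t : List A) : ℝ :=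
  if s = [] then (if t = [] then 1 else 0)
  else (if t = s then 1 - δ else 0) + δ * (delCount s t : ℝ) / (s.length : ℝ)

/-- Per-example 1-Delete loss. -/
noncomputable def delLoss {A : Type*} [DecidableEq A] (δ : ℝ) (s t : List A) : WithTop ℝ :=
  if t = s then ((-Real.log (1 - δ) : ℝ) : WithTop ℝ)
  else if 1 ≤ delCount s t then
    ((-Real.log (δ * (delCount s t : ℝ) / (s.length : ℝ)) : ℝ) : WithTop ℝ)
  else ⊤

/-- Cost structure for edit distance (removed from Mathlib; restored with its old meaning). -/
structure Levenshtein.Cost (α β δ : Type*) where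
  delete : α → δ
  insert : β → δ
  substitute : α → β → δ

/-- The default unit cost, as in the older Mathlib. -/
def Levenshtein.defaultCost {α : Type*} [DecidableEq α] : Levenshtein.Cost α α ℕ where
  delete _ := 1
  insert _ := 1
  substitute a b := if a = b then 0 else 1

/-- Levenshtein distance, by the recurrence the older Mathlib proved for its definition. -/
def levenshtein {α β δ : Type*} [AddZeroClass δ] [Min δ] (C : Levenshtein.Cost α β δ) :
    List α → List β → δ
  | [], [] => 0
  | [], y :: ys => C.insert y + levenshtein C [] ys
  | x :: xs, [] => C.delete x + levenshtein C xs []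
  | x :: xs, y :: ys =>
    min (C.delete x + levenshtein C xs (y :: ys))
      (min (C.insert y + levenshtein C (x :: xs) ys) (C.substitute x y + levenshtein C xs ys))

/-- DL-2 distance: the number of indices at which the (unit-cost Levenshtein)
edit distance between the component strings exceeds 2. -/
def dl2Dist {A : Type*} [DecidableEq A] {n : ℕ} (z z' : Fin n → List A) : ℕ :=
  (Finset.univ.filter
    (fun i : Fin n => 2 < levenshtein Levenshtein.defaultCost (z i) (z' i))).card

@[simp] lemma Levenshtein.defaultCost_delete {α : Type*} [DecidableEq α] (a : α) :
    (Levenshtein.defaultCost : Levenshtein.Cost α α ℕ).delete a = 1 := rfl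

@[simp] lemma Levenshtein.defaultCost_insert {α : Type*} [DecidableEq α] (a : α) :
    (Levenshtein.defaultCost : Levenshtein.Cost α α ℕ).insert a = 1 := rfl

@[simp] lemma Levenshtein.defaultCost_substitute {α : Type*} [DecidableEq α] (a b : α) :
    (Levenshtein.defaultCost : Levenshtein.Cost α α ℕ).substitute a b = if a = b then 0 else 1 := rfl

@[simp] lemma levenshtein_nil_nil {α β δ : Type*} [AddZeroClass δ] [Min δ]
    (C : Levenshtein.Cost α β δ) : levenshtein C [] [] = 0 := by
  rw [levenshtein]

@[simp] lemma levenshtein_nil_cons {α β δ : Type*} [AddZeroClass δ] [Min δ]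
    (C : Levenshtein.Cost α β δ) (y : β) (ys : List β) :
    levenshtein C [] (y :: ys) = C.insert y + levenshtein C [] ys := by
  rw [levenshtein]

@[simp] lemma levenshtein_cons_nil {α β δ : Type*} [AddZeroClass δ] [Min δ]
    (C : Levenshtein.Cost α β δ) (x : α) (xs : List α) :
    levenshtein C (x :: xs) [] = C.delete x + levenshtein C xs [] := by
  rw [levenshtein]

@[simp] lemma levenshtein_cons_cons {α β δ : Type*} [AddZeroClass δ] [Min δ]
    (C : Levenshtein.Cost α β δ) (x : α) (xs : List α) (y : β) (ys : List β) :
    levenshtein C (x :: xs) (y :: ys) =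
      min (C.delete x + levenshtein C xs (y :: ys))
        (min (C.insert y + levenshtein C (x :: xs) ys) (C.substitute x y + levenshtein C xs ys)) := by
  rw [levenshtein]

section Aux
variable {A : Type*} [DecidableEq A]

/-- The support of the 1-delete noise applied to `s`. -/
def delSupp (s : List A) : Finset (List A) :=
  insert s ((Finset.range s.length).image s.eraseIdx)

lemma mem_delSupp {s t : List A} :
    t ∈ delSupp s ↔ t = s ∨ ∃ j, j < s.length ∧ s.eraseIdx j = t := by
  simp [delSupp, Finset.mem_insert, Finset.mem_image, Finset.mem_range]

lemma self_mem_delSupp (s : List A) : s ∈ delSupp s := mem_delSupp.mpr (Or.inl rfl)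

lemma erase_mem_delSupp {s : List A} {j : ℕ} (hj : j < s.length) :
    s.eraseIdx j ∈ delSupp s := mem_delSupp.mpr (Or.inr ⟨j, hj, rfl⟩)

lemma delCount_eq_zero {s t : List A} (h : t ∉ delSupp s) : delCount s t = 0 := by
  rw [delCount, Finset.card_eq_zero, Finset.filter_eq_empty_iff]
  intro j hj hjt
  exact h (mem_delSupp.mpr (Or.inr ⟨j, Finset.mem_range.mp hj, hjt⟩))

lemma delNoise_eq_zero {δ : ℝ} {s t : List A} (h : t ∉ delSupp s) : delNoise δ s t = 0 := by
  have hts : t ≠ s := fun he => h (he ▸ self_mem_delSupp s)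
  rcases eq_or_ne s [] with rfl | hsnil
  · rw [delNoise, if_pos rfl, if_neg hts]
  · rw [delNoise, if_neg hsnil, if_neg hts, delCount_eq_zero h]
    simp

lemma delNoise_nonneg {δ : ℝ} (hδ0 : 0 < δ) (hδ1 : δ < 1) (s t : List A) :
    0 ≤ delNoise δ s t := by
  rw [delNoise]
  split
  · split <;> norm_num
  · have h1 : (0:ℝ) ≤ if t = s then 1 - δ else 0 := by split <;> linarith
    have h2 : (0:ℝ) ≤ δ * (delCount s t : ℝ) / (s.length : ℝ) := by positivity
    linarith

lemma delNoise_ne_zero_cases {δ : ℝ} {s t : List A} (h : delNoise δ s t ≠ 0) :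
    t = s ∨ 1 ≤ delCount s t := by
  by_contra hc
  push_neg at hc
  obtain ⟨hts, hcnt⟩ := hc
  have hcnt0 : delCount s t = 0 := by omega
  apply h
  rcases eq_or_ne s [] with rfl | hsnil
  · rw [delNoise, if_pos rfl, if_neg hts]
  · rw [delNoise, if_neg hsnil, if_neg hts, hcnt0]
    simp

lemma delNoise_sum {δ : ℝ} (s : List A) :
    ∑ t ∈ delSupp s, delNoise δ s t = 1 := by
  rcases eq_or_ne s [] with rfl | hs
  · simp [delSupp, delNoise]
  · have hlen : 0 < s.length := List.length_pos_iff.mpr hs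
    have hsum : ∑ t ∈ delSupp s, (delCount s t : ℝ) = (s.length : ℝ) := by
      have h0 : ∀ t ∈ delSupp s, (delCount s t : ℝ) =
          ∑ j ∈ Finset.range s.length, (if s.eraseIdx j = t then (1:ℝ) else 0) := by
        intro t _
        rw [delCount, Finset.card_filter]
        push_cast
        rfl
      rw [Finset.sum_congr rfl h0, Finset.sum_comm]
      have h1 : ∀ j ∈ Finset.range s.length,
          (∑ t ∈ delSupp s, if s.eraseIdx j = t then (1:ℝ) else 0) = 1 := by
        intro j hj
        rw [Finset.sum_ite_eq, if_pos (erase_mem_delSupp (Finset.mem_range.mp hj))]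
      rw [Finset.sum_congr rfl h1]
      simp
    have hexp : ∀ t ∈ delSupp s, delNoise δ s t =
        (if t = s then 1 - δ else 0) + δ * (delCount s t : ℝ) / (s.length : ℝ) := by
      intro t _
      rw [delNoise, if_neg hs]
    rw [Finset.sum_congr rfl hexp, Finset.sum_add_distrib]
    have h1 : ∑ t ∈ delSupp s, (if t = s then 1 - δ else 0) = 1 - δ := by
      rw [Finset.sum_ite_eq', if_pos (self_mem_delSupp s)]
    have h2 : ∑ t ∈ delSupp s, δ * (delCount s t : ℝ) / (s.length : ℝ) = δ := by
      rw [← Finset.sum_div, ← Finset.mul_sum, hsum]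
      field_simp
    rw [h1, h2]; ring

lemma delLoss_nonneg {δ : ℝ} (hδ0 : 0 < δ) (hδ1 : δ < 1) (s t : List A) :
    0 ≤ delLoss δ s t := by
  rw [delLoss]
  split
  · rw [← WithTop.coe_zero, WithTop.coe_le_coe]
    have : Real.log (1 - δ) ≤ 0 := Real.log_nonpos (by linarith) (by linarith)
    linarith
  · split
    · rename_i hcnt
      rw [← WithTop.coe_zero, WithTop.coe_le_coe]
      have hm : delCount s t ≤ s.length := le_trans (Finset.card_filter_le _ _)
        (le_of_eq (Finset.card_range _))
      have hl : 0 < s.length := by omega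
      have harg1 : δ * (delCount s t : ℝ) / (s.length : ℝ) ≤ 1 := by
        rw [div_le_one (by exact_mod_cast hl)]
        have : (delCount s t : ℝ) ≤ (s.length : ℝ) := by exact_mod_cast hm
        nlinarith
      have harg0 : 0 ≤ δ * (delCount s t : ℝ) / (s.length : ℝ) := by positivity
      have := Real.log_nonpos harg0 harg1
      linarith
    · exact le_top

lemma delLoss_ne_top {δ : ℝ} {s t : List A} (h : t = s ∨ 1 ≤ delCount s t) :
    delLoss δ s t ≠ ⊤ := by
  rcases eq_or_ne t s with rfl | hts
  · rw [delLoss, if_pos rfl]; exact WithTop.coe_ne_top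
  · have h1 : 1 ≤ delCount s t := h.resolve_left hts
    rw [delLoss, if_neg hts, if_pos h1]; exact WithTop.coe_ne_top

lemma delLoss_eq_top {δ : ℝ} {s t : List A} (h1 : t ≠ s) (h2 : delCount s t = 0) :
    delLoss δ s t = ⊤ := by
  rw [delLoss, if_neg h1, if_neg (by omega)]

section LevLemmas
variable {A : Type*} [DecidableEq A]


private lemma lev_self (s : List A) : levenshtein Levenshtein.defaultCost s s = 0 := by
  induction s with
  | nil => simp
  | cons c u ih => simp [ih]

private lemma lev_erase_left (s : List A) :
    ∀ (k : ℕ), k < s.length → ∀ v : List A,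
      levenshtein Levenshtein.defaultCost s v
        ≤ 1 + levenshtein Levenshtein.defaultCost (s.eraseIdx k) v := by
  induction s with
  | nil => intro k hk; simp at hk
  | cons c u ih =>
    intro k hk v
    cases k with
    | zero =>
      rw [List.eraseIdx_cons_zero]
      match v with
      | [] => simp
      | b :: v' =>
        rw [levenshtein_cons_cons]
        refine le_trans (min_le_left _ _) ?_
        simp
    | succ k =>
      have hk' : k < u.length := by simpa using hk
      rw [List.eraseIdx_cons_succ]
      induction v with
      | nil =>
        have h := ih k hk' []
        simp only [levenshtein_cons_nil]
        simp only [Levenshtein.defaultCost_delete]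
        omega
      | cons b v' ihv =>
        have h1 := ih k hk' (b :: v')
        have h3 := ih k hk' v'
        rw [levenshtein_cons_cons, levenshtein_cons_cons]
        rcases eq_or_ne c b with rfl | hcb
        · simp only [Levenshtein.defaultCost_delete, Levenshtein.defaultCost_insert,
            Levenshtein.defaultCost_substitute, if_pos rfl] at *
          omega
        · simp only [Levenshtein.defaultCost_delete, Levenshtein.defaultCost_insert,
            Levenshtein.defaultCost_substitute, if_neg hcb] at *
          omega

private lemma lev_erase_right (v : List A) :
    ∀ (k : ℕ), k < v.length → ∀ s : List A,
      levenshtein Levenshtein.defaultCost s v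
        ≤ 1 + levenshtein Levenshtein.defaultCost s (v.eraseIdx k) := by
  induction v with
  | nil => intro k hk; simp at hk
  | cons b v ih =>
    intro k hk s
    cases k with
    | zero =>
      rw [List.eraseIdx_cons_zero]
      match s with
      | [] => simp
      | c :: s' =>
        rw [levenshtein_cons_cons]
        refine le_trans (le_trans (min_le_right _ _) (min_le_left _ _)) ?_
        simp
    | succ k =>
      have hk' : k < v.length := by simpa using hk
      rw [List.eraseIdx_cons_succ]
      induction s with
      | nil =>
        have h := ih k hk' []
        simp only [levenshtein_nil_cons]
        simp only [Levenshtein.defaultCost_insert]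
        omega
      | cons c s' ihs =>
        have h1 := ih k hk' (c :: s')
        have h3 := ih k hk' s'
        rw [levenshtein_cons_cons, levenshtein_cons_cons]
        rcases eq_or_ne c b with rfl | hcb
        · simp only [Levenshtein.defaultCost_delete, Levenshtein.defaultCost_insert,
            Levenshtein.defaultCost_substitute, if_pos rfl] at *
          omega
        · simp only [Levenshtein.defaultCost_delete, Levenshtein.defaultCost_insert,
            Levenshtein.defaultCost_substitute, if_neg hcb] at *
          omega

end LevLemmas

lemma delCount_pos {A : Type*} [DecidableEq A] {s t : List A} (h : 1 ≤ delCount s t) :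
    ∃ j, j < s.length ∧ s.eraseIdx j = t := by
  have h0 : 0 < ((Finset.range s.length).filter (fun j => s.eraseIdx j = t)).card := h
  obtain ⟨j, hj⟩ := Finset.card_pos.mp h0
  obtain ⟨hj1, hj2⟩ := Finset.mem_filter.mp hj
  exact ⟨j, Finset.mem_range.mp hj1, hj2⟩

/-- If `y` is in the support of the 1-delete noise applied to `zh`, and `z` is at
Levenshtein distance greater than 2 from `zh`, then the loss of `z` at `y` is `⊤`. -/
lemma delLoss_top_of_far {A : Type*} [DecidableEq A] {δ : ℝ} {z zh y : List A}
    (hy : y = zh ∨ ∃ j, j < zh.length ∧ zh.eraseIdx j = y)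
    (hlev : 2 < levenshtein Levenshtein.defaultCost z zh) :
    delLoss δ z y = ⊤ := by
  have hyz : levenshtein Levenshtein.defaultCost y zh ≤ 1 := by
    rcases hy with rfl | ⟨j, hj, hje⟩
    · simp [lev_self]
    · subst hje
      calc levenshtein Levenshtein.defaultCost (zh.eraseIdx j) zh
          ≤ 1 + levenshtein Levenshtein.defaultCost (zh.eraseIdx j) (zh.eraseIdx j) :=
            lev_erase_right zh j hj _
        _ = 1 := by rw [lev_self]
  apply delLoss_eq_top
  · intro hzy
    subst hzy
    omega
  · by_contra hc
    have h1 : 1 ≤ delCount z y := by omega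
    obtain ⟨k, hk, hke⟩ := delCount_pos h1
    have : levenshtein Levenshtein.defaultCost z zh
        ≤ 1 + levenshtein Levenshtein.defaultCost (z.eraseIdx k) zh :=
      lev_erase_left z k hk zh
    rw [hke] at this
    omega


end Aux

theorem stmt11 {A : Type*} [Fintype A] [DecidableEq A] (hA : 2 ≤ Fintype.card A)
    (δ : ℝ) (hδ0 : 0 < δ) (hδ1 : δ < 1) :
    -- the probability of the separating event is exactly 1
    (∀ (n : ℕ) (zh : Fin n → List A) (γ : ℝ),
      (∑' y : Fin n → List A,
        (if ∀ z : Fin n → List A, 1 ≤ dl2Dist z zh →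
            (∑ i : Fin n, delLoss δ (zh i) (y i)) + (γ : WithTop ℝ)
              < ∑ i : Fin n, delLoss δ (z i) (y i)
         then ∏ i : Fin n, delNoise δ (zh i) (y i) else 0)) = 1)
    ∧
    -- consequently, the 1-Delete Noise Source is differentiating
    -- w.r.t. `d_DL2` and `L_1D`
    (∀ γ > (0 : ℝ), ∀ δ' > (0 : ℝ), ∃ εN > (0 : ℝ), ∃ nN : ℕ, ∀ n ≥ nN,
      ∀ zh : Fin n → List A,
      1 - δ' ≤ ∑' y : Fin n → List A,
        (if ∀ z : Fin n → List A, εN ≤ (dl2Dist z zh : ℝ) →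
            (∑ i : Fin n, delLoss δ (zh i) (y i)) + (γ : WithTop ℝ)
              < ∑ i : Fin n, delLoss δ (z i) (y i)
         then ∏ i : Fin n, delNoise δ (zh i) (y i) else 0)) := by
  have part1 : ∀ (n : ℕ) (zh : Fin n → List A) (γ : ℝ),
      (∑' y : Fin n → List A,
        (if ∀ z : Fin n → List A, 1 ≤ dl2Dist z zh →
            (∑ i : Fin n, delLoss δ (zh i) (y i)) + (γ : WithTop ℝ)
              < ∑ i : Fin n, delLoss δ (z i) (y i)
         then ∏ i : Fin n, delNoise δ (zh i) (y i) else 0)) = 1 := by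
    intro n zh γ
    have hzero : ∀ y : Fin n → List A,
        y ∉ Fintype.piFinset (fun i => delSupp (zh i)) →
        (if ∀ z : Fin n → List A, 1 ≤ dl2Dist z zh →
            (∑ i : Fin n, delLoss δ (zh i) (y i)) + (γ : WithTop ℝ)
              < ∑ i : Fin n, delLoss δ (z i) (y i)
         then ∏ i : Fin n, delNoise δ (zh i) (y i) else 0) = 0 := by
      intro y hy
      rw [Fintype.mem_piFinset] at hy
      push_neg at hy
      obtain ⟨i, hi⟩ := hy
      have hprod : ∏ i : Fin n, delNoise δ (zh i) (y i) = 0 :=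
        Finset.prod_eq_zero (Finset.mem_univ i) (delNoise_eq_zero hi)
      split <;> simp [hprod]
    rw [tsum_eq_sum hzero]
    have hval : ∀ y ∈ Fintype.piFinset (fun i => delSupp (zh i)),
        (if ∀ z : Fin n → List A, 1 ≤ dl2Dist z zh →
            (∑ i : Fin n, delLoss δ (zh i) (y i)) + (γ : WithTop ℝ)
              < ∑ i : Fin n, delLoss δ (z i) (y i)
         then ∏ i : Fin n, delNoise δ (zh i) (y i) else 0)
          = ∏ i : Fin n, delNoise δ (zh i) (y i) := by
      intro y _
      by_cases hprod : (∏ i : Fin n, delNoise δ (zh i) (y i)) = 0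
      · split
        · rfl
        · exact hprod.symm
      · rw [if_pos]
        intro z hz
        have hfac : ∀ i : Fin n, delNoise δ (zh i) (y i) ≠ 0 := fun i =>
          Finset.prod_ne_zero_iff.mp hprod i (Finset.mem_univ i)
        -- an index where z and zh are far apart
        obtain ⟨i0, hi0⟩ := Finset.card_pos.mp (by omega : 0 < dl2Dist z zh)
        have hi0' : 2 < levenshtein Levenshtein.defaultCost (z i0) (zh i0) :=
          (Finset.mem_filter.mp hi0).2
        -- RHS is ⊤
        have hy0 : y i0 = zh i0 ∨ ∃ j, j < (zh i0).length ∧ (zh i0).eraseIdx j = y i0 := by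
          rcases delNoise_ne_zero_cases (hfac i0) with h | h
          · exact Or.inl h
          · exact Or.inr (delCount_pos h)
        have htop : ∑ i : Fin n, delLoss δ (z i) (y i) = ⊤ :=
          WithTop.sum_eq_top.mpr ⟨i0, Finset.mem_univ i0, delLoss_top_of_far hy0 hi0'⟩
        rw [htop]
        -- LHS is finite
        have hlt : (∑ i : Fin n, delLoss δ (zh i) (y i)) + (γ : WithTop ℝ) < ⊤ := by
          rw [WithTop.add_lt_top]
          constructor
          · exact WithTop.sum_lt_top.mpr fun i _ =>
              lt_top_iff_ne_top.mpr (delLoss_ne_top (delNoise_ne_zero_cases (hfac i)))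
          · exact lt_top_iff_ne_top.mpr WithTop.coe_ne_top
        exact hlt
    rw [Finset.sum_congr rfl hval, ← Finset.prod_univ_sum]
    rw [Finset.prod_congr rfl (fun i _ => delNoise_sum (zh i))]
    simp
  refine ⟨part1, ?_⟩
  intro γ hγ δ' hδ'
  refine ⟨1, one_pos, 0, fun n _ zh => ?_⟩
  have heq : (∑' y : Fin n → List A,
        (if ∀ z : Fin n → List A, (1:ℝ) ≤ (dl2Dist z zh : ℝ) →
            (∑ i : Fin n, delLoss δ (zh i) (y i)) + (γ : WithTop ℝ)
              < ∑ i : Fin n, delLoss δ (z i) (y i)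
         then ∏ i : Fin n, delNoise δ (zh i) (y i) else 0))
      = (∑' y : Fin n → List A,
        (if ∀ z : Fin n → List A, 1 ≤ dl2Dist z zh →
            (∑ i : Fin n, delLoss δ (zh i) (y i)) + (γ : WithTop ℝ)
              < ∑ i : Fin n, delLoss δ (z i) (y i)
         then ∏ i : Fin n, delNoise δ (zh i) (y i) else 0)) := by
    refine tsum_congr fun y => ?_
    refine if_congr ⟨fun h z hz => h z ?_, fun h z hz => h z ?_⟩ rfl rfl
    · exact_mod_cast hz
    · exact_mod_cast hz
  rw [heq, part1 n zh γ]
  linarith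
end

section
/- Let p_1 and p_2 be programs in G with p_2 ≠ p_1 as functions. Then for every noise source rho_N, every loss function L, and every n, the probability, over x sampled from rho_i^n and y sampled from rho_N(.|p_1[x]), of the success event for p_1 is at most the probability under x ~ rho_i^n that p_1[x] ≠ p_2[x]. In particular, if there is δ_i such that for every n the probability under x ~ rho_i^n that p_1[x] ≠ p_2[x] is strictly less than δ_i, then for every n the probability of the success event for p_1 is strictly less than δ_i. -/
/-!
STATEMENT 15: Let `p₁, p₂ ∈ G` with `p₂ ≠ p₁` as functions.  Then for every
noise source `ρN`, every loss function `L`, and every `n`, the probability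
(over `x ~ ρi^n`, `y ~ ρN(·|p₁[x])`) of the success event for `p₁` is at most
the probability under `x ~ ρi^n` that `p₁[x] ≠ p₂[x]`.  In particular, if
there is `δᵢ` such that for every `n` the probability that `p₁[x] ≠ p₂[x]` is
strictly less than `δᵢ`, then for every `n` the success probability for `p₁`
is strictly less than `δᵢ`.
-/

attribute [local instance] Classical.propDecidable

theorem stmt15 {X Y : Type*} [Countable X] [Countable Y]
    (G : Finset (X → Y)) (hG : G.Nonempty)
    -- prior distribution over programs in `G`
    (ρp : (X → Y) → ℝ) (hρp0 : ∀ q, 0 ≤ ρp q) (hρp1 : ∑ q ∈ G, ρp q = 1)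
    -- input source
    (ρi : (n : ℕ) → (Fin n → X) → ℝ)
    (hρi0 : ∀ n x, 0 ≤ ρi n x) (hρi1 : ∀ n, ∑' x : Fin n → X, ρi n x = 1)
    -- an arbitrary noise source
    (ρN : (n : ℕ) → (Fin n → Y) → (Fin n → Y) → ℝ)
    (hρN0 : ∀ n z y, 0 ≤ ρN n z y) (hρN1 : ∀ n z, ∑' y : Fin n → Y, ρN n z y = 1)
    -- an arbitrary loss function valued in `ℝ ∪ {+∞}`
    (L : (n : ℕ) → (Fin n → Y) → (Fin n → Y) → WithTop ℝ)
    -- two programs in `G`, distinct as functions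
    (p₁ p₂ : X → Y) (hp₁ : p₁ ∈ G) (hp₂ : p₂ ∈ G) (hne : p₂ ≠ p₁) :
    -- the success probability for `p₁` is at most `Pr[p₁[x] ≠ p₂[x]]` ...
    (∀ n : ℕ,
      (∑' x : Fin n → X, ∑' y : Fin n → Y,
        (if ∀ p ∈ G, p ≠ p₁ →
            L n (progOut p₁ x) y +
                negLog (∑ q ∈ G.filter (fun q => progOut q x = progOut p₁ x), ρp q)
              < L n (progOut p x) y +
                negLog (∑ q ∈ G.filter (fun q => progOut q x = progOut p x), ρp q)
         then ρi n x * ρN n (progOut p₁ x) y else 0))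
      ≤ ∑' x : Fin n → X, (if progOut p₁ x ≠ progOut p₂ x then ρi n x else 0))
    ∧
    -- ... in particular, if `Pr[p₁[x] ≠ p₂[x]] < δᵢ` for every `n`, the
    -- success probability for `p₁` is `< δᵢ` for every `n`
    (∀ δi : ℝ,
      (∀ n : ℕ,
        (∑' x : Fin n → X, (if progOut p₁ x ≠ progOut p₂ x then ρi n x else 0)) < δi) →
      ∀ n : ℕ,
        (∑' x : Fin n → X, ∑' y : Fin n → Y,
          (if ∀ p ∈ G, p ≠ p₁ →
              L n (progOut p₁ x) y +
                  negLog (∑ q ∈ G.filter (fun q => progOut q x = progOut p₁ x), ρp q)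
                < L n (progOut p x) y +
                  negLog (∑ q ∈ G.filter (fun q => progOut q x = progOut p x), ρp q)
           then ρi n x * ρN n (progOut p₁ x) y else 0)) < δi) := by
  have key : ∀ n : ℕ,
      (∑' x : Fin n → X, ∑' y : Fin n → Y,
        (if ∀ p ∈ G, p ≠ p₁ →
            L n (progOut p₁ x) y +
                negLog (∑ q ∈ G.filter (fun q => progOut q x = progOut p₁ x), ρp q)
              < L n (progOut p x) y +
                negLog (∑ q ∈ G.filter (fun q => progOut q x = progOut p x), ρp q)
         then ρi n x * ρN n (progOut p₁ x) y else 0))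
      ≤ ∑' x : Fin n → X, (if progOut p₁ x ≠ progOut p₂ x then ρi n x else 0) := by
    intro n
    have hSi : Summable (ρi n) := by
      by_contra h
      have := hρi1 n
      rw [tsum_eq_zero_of_not_summable h] at this
      norm_num at this
    have hSN : ∀ z, Summable (ρN n z) := by
      intro z
      by_contra h
      have := hρN1 n z
      rw [tsum_eq_zero_of_not_summable h] at this
      norm_num at this
    have hSrhs : Summable (fun x : Fin n → X =>
        (if progOut p₁ x ≠ progOut p₂ x then ρi n x else 0)) := by
      apply Summable.of_nonneg_of_le _ _ hSi
      · intro x; split <;> simp [hρi0 n]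
      · intro x; split <;> simp [hρi0 n]
    -- pointwise bound on the inner sum
    have hpt : ∀ x : Fin n → X,
        (∑' y : Fin n → Y,
          (if ∀ p ∈ G, p ≠ p₁ →
              L n (progOut p₁ x) y +
                  negLog (∑ q ∈ G.filter (fun q => progOut q x = progOut p₁ x), ρp q)
                < L n (progOut p x) y +
                  negLog (∑ q ∈ G.filter (fun q => progOut q x = progOut p x), ρp q)
           then ρi n x * ρN n (progOut p₁ x) y else 0))
        ≤ (if progOut p₁ x ≠ progOut p₂ x then ρi n x else 0) := by
      intro x
      by_cases heq : progOut p₁ x = progOut p₂ x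
      · -- the success condition never holds
        have hzero : ∀ y : Fin n → Y,
            ¬ (∀ p ∈ G, p ≠ p₁ →
              L n (progOut p₁ x) y +
                  negLog (∑ q ∈ G.filter (fun q => progOut q x = progOut p₁ x), ρp q)
                < L n (progOut p x) y +
                  negLog (∑ q ∈ G.filter (fun q => progOut q x = progOut p x), ρp q)) := by
          intro y h
          have := h p₂ hp₂ hne
          rw [← heq] at this
          exact lt_irrefl _ this
        rw [if_neg (by simp [heq])]
        have : (fun y : Fin n → Y =>
            (if ∀ p ∈ G, p ≠ p₁ →
              L n (progOut p₁ x) y +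
                  negLog (∑ q ∈ G.filter (fun q => progOut q x = progOut p₁ x), ρp q)
                < L n (progOut p x) y +
                  negLog (∑ q ∈ G.filter (fun q => progOut q x = progOut p x), ρp q)
             then ρi n x * ρN n (progOut p₁ x) y else 0)) = fun _ => (0 : ℝ) := by
          funext y
          simp [hzero y]
        rw [this, tsum_zero]
      · simp only [ne_eq, heq, not_false_eq_true, if_true]
        calc (∑' y : Fin n → Y, _) ≤ ∑' y : Fin n → Y, ρi n x * ρN n (progOut p₁ x) y := by
              apply Summable.tsum_le_tsum _ _ ((hSN _).mul_left _)
              · intro y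
                split
                · exact le_refl _
                · exact mul_nonneg (hρi0 _ _) (hρN0 _ _ _)
              · apply Summable.of_nonneg_of_le _ _ ((hSN (progOut p₁ x)).mul_left (ρi n x))
                · intro y; split
                  · exact mul_nonneg (hρi0 _ _) (hρN0 _ _ _)
                  · exact le_refl _
                · intro y; split
                  · exact le_refl _
                  · exact mul_nonneg (hρi0 _ _) (hρN0 _ _ _)
          _ = ρi n x := by rw [tsum_mul_left, hρN1, mul_one]
    apply Summable.tsum_le_tsum hpt _ hSrhs
    · apply Summable.of_nonneg_of_le _ hpt hSrhs
      intro x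
      apply tsum_nonneg
      intro y
      split
      · exact mul_nonneg (hρi0 _ _) (hρN0 _ _ _)
      · exact le_refl _
  refine ⟨key, ?_⟩
  intro δi hδ n
  exact lt_of_le_of_lt (key n) (hδ n)
end

section
/- Let p_a and p_b be programs in G with p_a ≠ p_b as functions, and suppose the noise source satisfies rho_N(.|p_a[x]) = rho_N(.|p_b[x]) for every n and every x in X^n. Then for every loss function L and every n, the probability (over x ~ rho_i^n and y ~ rho_N(.|p_a[x])) of the success event for p_a, plus the probability (over x ~ rho_i^n and y ~ rho_N(.|p_b[x])) of the success event for p_b, is at most 1. Consequently, if for some n the success probability for p_a is at least 1 - δ, then the success probability for p_b is at most δ; the synthesis algorithm cannot converge for both p_a and p_b. -/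
/-!
STATEMENT 16: Let `p_a, p_b ∈ G` with `p_a ≠ p_b` as functions, and suppose
the noise source satisfies `ρN(·|p_a[x]) = ρN(·|p_b[x])` for every `n` and
`x`.  Then for every loss function `L` and every `n`, the success probability
for `p_a` plus the success probability for `p_b` is at most `1`.
Consequently, if for some `n` the success probability for `p_a` is at least
`1 - δ`, then the success probability for `p_b` is at most `δ`.
-/

attribute [local instance] Classical.propDecidable

theorem stmt16 {X Y : Type*} [Countable X] [Countable Y]
    (G : Finset (X → Y)) (hG : G.Nonempty)
    -- prior distribution over programs in `G`
    (ρp : (X → Y) → ℝ) (hρp0 : ∀ q, 0 ≤ ρp q) (hρp1 : ∑ q ∈ G, ρp q = 1)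
    -- input source
    (ρi : (n : ℕ) → (Fin n → X) → ℝ)
    (hρi0 : ∀ n x, 0 ≤ ρi n x) (hρi1 : ∀ n, ∑' x : Fin n → X, ρi n x = 1)
    -- noise source
    (ρN : (n : ℕ) → (Fin n → Y) → (Fin n → Y) → ℝ)
    (hρN0 : ∀ n z y, 0 ≤ ρN n z y) (hρN1 : ∀ n z, ∑' y : Fin n → Y, ρN n z y = 1)
    -- two programs in `G`, distinct as functions
    (pa pb : X → Y) (hpa : pa ∈ G) (hpb : pb ∈ G) (hne : pa ≠ pb)
    -- the noise source cannot distinguish the outputs of `p_a` and `p_b`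
    (hconf : ∀ (n : ℕ) (x : Fin n → X), ρN n (progOut pa x) = ρN n (progOut pb x))
    -- an arbitrary loss function valued in `ℝ ∪ {+∞}`
    (L : (n : ℕ) → (Fin n → Y) → (Fin n → Y) → WithTop ℝ) :
    -- the two success probabilities sum to at most 1 ...
    (∀ n : ℕ,
      (∑' x : Fin n → X, ∑' y : Fin n → Y,
        (if ∀ p ∈ G, p ≠ pa →
            L n (progOut pa x) y +
                negLog (∑ q ∈ G.filter (fun q => progOut q x = progOut pa x), ρp q)
              < L n (progOut p x) y +
                negLog (∑ q ∈ G.filter (fun q => progOut q x = progOut p x), ρp q)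
         then ρi n x * ρN n (progOut pa x) y else 0))
      +
      (∑' x : Fin n → X, ∑' y : Fin n → Y,
        (if ∀ p ∈ G, p ≠ pb →
            L n (progOut pb x) y +
                negLog (∑ q ∈ G.filter (fun q => progOut q x = progOut pb x), ρp q)
              < L n (progOut p x) y +
                negLog (∑ q ∈ G.filter (fun q => progOut q x = progOut p x), ρp q)
         then ρi n x * ρN n (progOut pb x) y else 0))
      ≤ 1)
    ∧
    -- ... consequently, convergence is impossible for both `p_a` and `p_b`
    (∀ (n : ℕ) (δ : ℝ),
      1 - δ ≤
        (∑' x : Fin n → X, ∑' y : Fin n → Y,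
          (if ∀ p ∈ G, p ≠ pa →
              L n (progOut pa x) y +
                  negLog (∑ q ∈ G.filter (fun q => progOut q x = progOut pa x), ρp q)
                < L n (progOut p x) y +
                  negLog (∑ q ∈ G.filter (fun q => progOut q x = progOut p x), ρp q)
           then ρi n x * ρN n (progOut pa x) y else 0)) →
      (∑' x : Fin n → X, ∑' y : Fin n → Y,
        (if ∀ p ∈ G, p ≠ pb →
            L n (progOut pb x) y +
                negLog (∑ q ∈ G.filter (fun q => progOut q x = progOut pb x), ρp q)
              < L n (progOut p x) y +
                negLog (∑ q ∈ G.filter (fun q => progOut q x = progOut p x), ρp q)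
         then ρi n x * ρN n (progOut pb x) y else 0)) ≤ δ) := by
  have key : ∀ n : ℕ,
      (∑' x : Fin n → X, ∑' y : Fin n → Y,
        (if ∀ p ∈ G, p ≠ pa →
            L n (progOut pa x) y +
                negLog (∑ q ∈ G.filter (fun q => progOut q x = progOut pa x), ρp q)
              < L n (progOut p x) y +
                negLog (∑ q ∈ G.filter (fun q => progOut q x = progOut p x), ρp q)
         then ρi n x * ρN n (progOut pa x) y else 0))
      +
      (∑' x : Fin n → X, ∑' y : Fin n → Y,
        (if ∀ p ∈ G, p ≠ pb →
            L n (progOut pb x) y +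
                negLog (∑ q ∈ G.filter (fun q => progOut q x = progOut pb x), ρp q)
              < L n (progOut p x) y +
                negLog (∑ q ∈ G.filter (fun q => progOut q x = progOut p x), ρp q)
         then ρi n x * ρN n (progOut pb x) y else 0))
      ≤ 1 := by
    intro n
    set Pa : (Fin n → X) → (Fin n → Y) → Prop := fun x y =>
      ∀ p ∈ G, p ≠ pa →
        L n (progOut pa x) y +
            negLog (∑ q ∈ G.filter (fun q => progOut q x = progOut pa x), ρp q)
          < L n (progOut p x) y +
            negLog (∑ q ∈ G.filter (fun q => progOut q x = progOut p x), ρp q) with hPa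
    set Pb : (Fin n → X) → (Fin n → Y) → Prop := fun x y =>
      ∀ p ∈ G, p ≠ pb →
        L n (progOut pb x) y +
            negLog (∑ q ∈ G.filter (fun q => progOut q x = progOut pb x), ρp q)
          < L n (progOut p x) y +
            negLog (∑ q ∈ G.filter (fun q => progOut q x = progOut p x), ρp q) with hPb
    set f : (Fin n → X) → (Fin n → Y) → ℝ := fun x y =>
      if Pa x y then ρi n x * ρN n (progOut pa x) y else 0 with hf
    set g : (Fin n → X) → (Fin n → Y) → ℝ := fun x y =>
      if Pb x y then ρi n x * ρN n (progOut pb x) y else 0 with hg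
    set w : (Fin n → X) → (Fin n → Y) → ℝ := fun x y =>
      ρi n x * ρN n (progOut pa x) y with hw
    -- mutual exclusivity
    have hexcl : ∀ x y, ¬ (Pa x y ∧ Pb x y) := by
      rintro x y ⟨ha, hb⟩
      have h1 := ha pb hpb (Ne.symm hne)
      have h2 := hb pa hpa hne
      exact absurd h2 (not_lt.2 h1.le)
    have hgw : ∀ x y, g x y = if Pb x y then w x y else 0 := by
      intro x y
      simp only [hg, hw, hconf n x]
    have hfg_le : ∀ x y, f x y + g x y ≤ w x y := by
      intro x y
      have hw0 : 0 ≤ w x y := mul_nonneg (hρi0 n x) (hρN0 n _ y)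
      rw [hgw]
      by_cases hA : Pa x y
      · have hB : ¬ Pb x y := fun hB => hexcl x y ⟨hA, hB⟩
        show (if Pa x y then _ else _) + (if Pb x y then _ else _) ≤ _
        rw [if_pos hA, if_neg hB, add_zero]
      · show (if Pa x y then _ else _) + (if Pb x y then _ else _) ≤ _
        rw [if_neg hA, zero_add]
        by_cases hB : Pb x y
        · rw [if_pos hB]
        · rw [if_neg hB]; exact hw0
    have hf0 : ∀ x y, 0 ≤ f x y := by
      intro x y
      show 0 ≤ if Pa x y then _ else _
      by_cases h : Pa x y
      · rw [if_pos h]; exact mul_nonneg (hρi0 n x) (hρN0 n _ y)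
      · rw [if_neg h]
    have hg0 : ∀ x y, 0 ≤ g x y := by
      intro x y
      show 0 ≤ if Pb x y then _ else _
      by_cases h : Pb x y
      · rw [if_pos h]; exact mul_nonneg (hρi0 n x) (hρN0 n _ y)
      · rw [if_neg h]
    have hfw : ∀ x y, f x y ≤ w x y := fun x y =>
      le_trans (le_add_of_nonneg_right (hg0 x y)) (hfg_le x y)
    have hgw' : ∀ x y, g x y ≤ w x y := fun x y =>
      le_trans (le_add_of_nonneg_left (hf0 x y)) (hfg_le x y)
    -- summability
    have hρNs : ∀ z : Fin n → Y, Summable (ρN n z) := by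
      intro z
      by_contra h
      have := hρN1 n z
      rw [tsum_eq_zero_of_not_summable h] at this
      norm_num at this
    have hρis : Summable (ρi n) := by
      by_contra h
      have := hρi1 n
      rw [tsum_eq_zero_of_not_summable h] at this
      norm_num at this
    have hws : ∀ x, Summable (w x) := fun x => (hρNs (progOut pa x)).mul_left _
    have hwt : ∀ x, ∑' y, w x y = ρi n x := by
      intro x
      rw [hw]
      simp only
      rw [tsum_mul_left, hρN1 n, mul_one]
    have hfs : ∀ x, Summable (f x) := fun x =>
      Summable.of_nonneg_of_le (hf0 x) (hfw x) (hws x)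
    have hgs : ∀ x, Summable (g x) := fun x =>
      Summable.of_nonneg_of_le (hg0 x) (hgw' x) (hws x)
    set F : (Fin n → X) → ℝ := fun x => ∑' y, f x y with hF
    set Gg : (Fin n → X) → ℝ := fun x => ∑' y, g x y with hGg
    have hFG : ∀ x, F x + Gg x ≤ ρi n x := by
      intro x
      have : F x + Gg x = ∑' y, (f x y + g x y) := (Summable.tsum_add (hfs x) (hgs x)).symm
      rw [this, ← hwt x]
      exact Summable.tsum_le_tsum (fun y => hfg_le x y) ((hfs x).add (hgs x)) (hws x)
    have hF0 : ∀ x, 0 ≤ F x := fun x => tsum_nonneg (hf0 x)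
    have hG0 : ∀ x, 0 ≤ Gg x := fun x => tsum_nonneg (hg0 x)
    have hFle : ∀ x, F x ≤ ρi n x := fun x =>
      le_trans (le_add_of_nonneg_right (hG0 x)) (hFG x)
    have hGle : ∀ x, Gg x ≤ ρi n x := fun x =>
      le_trans (le_add_of_nonneg_left (hF0 x)) (hFG x)
    have hFs : Summable F := Summable.of_nonneg_of_le hF0 hFle hρis
    have hGs : Summable Gg := Summable.of_nonneg_of_le hG0 hGle hρis
    calc (∑' x, F x) + (∑' x, Gg x) = ∑' x, (F x + Gg x) := (Summable.tsum_add hFs hGs).symm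
      _ ≤ ∑' x, ρi n x := Summable.tsum_le_tsum hFG (hFs.add hGs) hρis
      _ = 1 := hρi1 n
  refine ⟨key, fun n δ hδ => ?_⟩
  have := key n
  linarith
end
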